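/- Conjunction introduction holds in exactly the two homogeneous forms of B-entailment: ({α, β} | ∅ ⊨ ∅ | {α∧β}) and (∅ | {α, β} ⊨ {α∧β} | ∅) are valid, while for propositional variables α, β the forms (∅ | {α, β} ⊨ ∅ | {α∧β}) and ({β} | {α} ⊨ ∅ | {α∧β}) are invalid. -/

import Mathlib

/-- The four truth-values of Dunn-Belnap logic. -/
inductive Four where
  | f | bot | top | t
deriving DecidableEq, Repr

namespace Four

/-- Whether the value contains the classical value T. -/
def hasT : Four → Bool
  | t => true | top => true | _ => false

/-- Whether the value contains the classical value F. -/
def hasF : Four → Bool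
  | f => true | top => true | _ => false

/-- Build a value from its T-part and F-part. -/
def mk : Bool → Bool → Four
  | true, true => top
  | true, false => t
  | false, true => f
  | false, false => bot

/-- Logical order: x ≤_t y iff x∩{T} ⊆ y∩{T} and y∩{F} ⊆ x∩{F}. -/
def leT (x y : Four) : Prop :=
  (x.hasT = true → y.hasT = true) ∧ (y.hasF = true → x.hasF = true)

/-- Information order: x ≤_i y iff x ⊆ y. -/
def leI (x y : Four) : Prop :=
  (x.hasT = true → y.hasT = true) ∧ (x.hasF = true → y.hasF = true)

/-- Negation: swaps T and F membership. -/
def negT (x : Four) : Four := mk x.hasF x.hasT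

/-- Infimum w.r.t. the logical order. -/
def meetT (x y : Four) : Four := mk (x.hasT && y.hasT) (x.hasF || y.hasF)

/-- Supremum w.r.t. the logical order. -/
def joinT (x y : Four) : Four := mk (x.hasT || y.hasT) (x.hasF && y.hasF)

/-- Infimum w.r.t. the information order. -/
def meetI (x y : Four) : Four := mk (x.hasT && y.hasT) (x.hasF && y.hasF)

/-- Supremum w.r.t. the information order. -/
def joinI (x y : Four) : Four := mk (x.hasT || y.hasT) (x.hasF || y.hasF)

/-- Acceptance: designated set Y = {⊤, t}. -/
def acc (x : Four) : Prop := x = top ∨ x = t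

/-- Rejection: set N = {f, ⊤}. -/
def rej (x : Four) : Prop := x = f ∨ x = top

end Four

/-- Formulas of the language S: propositional variables, ¬, ∧, ∨. -/
inductive Form where
  | var : ℕ → Form
  | neg : Form → Form
  | conj : Form → Form → Form
  | disj : Form → Form → Form
deriving DecidableEq

/-- A valuation (agent) is determined by its values on variables; it is
extended homomorphically to all formulas. -/
def Form.eval (v : ℕ → Four) : Form → Four
  | var n => v n
  | neg φ => (φ.eval v).negT
  | conj φ ψ => (φ.eval v).meetT (ψ.eval v)
  | disj φ ψ => (φ.eval v).joinT (ψ.eval v)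

open Four Form

/-- Truth-preserving (Tarskian) entailment ⊨ᵗ = ⊨⁴. -/
def entT (Γ : Set Form) (α : Form) : Prop :=
  ¬ ∃ v : ℕ → Four, (∀ γ ∈ Γ, acc (γ.eval v)) ∧ ¬ acc (α.eval v)

/-- Falsity entailment ⊨ᶠ: no valuation not-rejects all premises while rejecting the conclusion. -/
def entF (Γ : Set Form) (α : Form) : Prop :=
  ¬ ∃ v : ℕ → Four, (∀ γ ∈ Γ, ¬ rej (γ.eval v)) ∧ rej (α.eval v)

/-- q-entailment: no valuation not-rejects all premises while not-accepting the conclusion. -/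
def entQ (Γ : Set Form) (α : Form) : Prop :=
  ¬ ∃ v : ℕ → Four, (∀ γ ∈ Γ, ¬ rej (γ.eval v)) ∧ ¬ acc (α.eval v)

/-- p-entailment: no valuation accepts all premises while rejecting the conclusion. -/
def entP (Γ : Set Form) (α : Form) : Prop :=
  ¬ ∃ v : ℕ → Four, (∀ γ ∈ Γ, acc (γ.eval v)) ∧ rej (α.eval v)

/-- B-entailment (Γ | Ψ ⊨ Φ | Δ): no valuation accepts all of Γ,
not-accepts all of Δ, rejects all of Φ and not-rejects all of Ψ. -/
def Bent (Γ Ψ Φ Δ : Set Form) : Prop :=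
  ¬ ∃ v : ℕ → Four,
    (∀ γ ∈ Γ, acc (γ.eval v)) ∧ (∀ δ ∈ Δ, ¬ acc (δ.eval v)) ∧
    (∀ φ ∈ Φ, rej (φ.eval v)) ∧ (∀ ψ ∈ Ψ, ¬ rej (ψ.eval v))

namespace Four

theorem acc_meetT {x y : Four} : acc (x.meetT y) ↔ acc x ∧ acc y := by
  cases x <;> cases y <;> simp [meetT, mk, hasT, hasF, acc]

theorem rej_meetT {x y : Four} : rej (x.meetT y) ↔ rej x ∨ rej y := by
  cases x <;> cases y <;> simp [meetT, mk, hasT, hasF, rej]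

theorem not_acc_bot : ¬ acc bot := by simp [acc]

theorem not_rej_bot : ¬ rej bot := by simp [rej]

end Four

/-- `bot` is a fixed point of every connective, so the constant-`bot` valuation
accepts and rejects nothing. -/
theorem Form.eval_const_bot (φ : Form) : φ.eval (fun _ => bot) = bot := by
  induction φ with
  | var n => rfl
  | neg φ ih => simp only [eval, ih]; rfl
  | conj φ ψ ihφ ihψ => simp only [eval, ihφ, ihψ]; rfl
  | disj φ ψ ihφ ihψ => simp only [eval, ihφ, ihψ]; rfl

theorem bent_conj_intro_acc (α β : Form) : Bent {α, β} ∅ ∅ {conj α β} := by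
  rintro ⟨v, hΓ, hΔ, -, -⟩
  exact hΔ _ rfl (acc_meetT.2 ⟨hΓ α (.inl rfl), hΓ β (.inr rfl)⟩)

theorem bent_conj_intro_rej (α β : Form) : Bent ∅ {α, β} {conj α β} ∅ := by
  rintro ⟨v, -, -, hΦ, hΨ⟩
  rcases rej_meetT.1 (hΦ _ rfl) with hα | hβ
  · exact hΨ α (.inl rfl) hα
  · exact hΨ β (.inr rfl) hβ

theorem not_bent_conj_intro_unrej_unacc (α β : Form) : ¬ Bent ∅ {α, β} ∅ {conj α β} := by
  refine not_not.2 ⟨fun _ => bot, by simp, ?_, by simp, ?_⟩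
  · rintro δ rfl
    rw [eval_const_bot]
    exact not_acc_bot
  · rintro ψ -
    rw [eval_const_bot]
    exact not_rej_bot

theorem not_bent_conj_intro_mixed {n m : ℕ} (hnm : n ≠ m) :
    ¬ Bent {var m} {var n} ∅ {conj (var n) (var m)} := by
  refine not_not.2 ⟨Function.update (fun _ => bot) m t, ?_, ?_, by simp, ?_⟩
  · rintro γ rfl
    simp [eval, acc]
  · rintro δ rfl
    simp [eval, hnm, acc_meetT, not_acc_bot]
  · rintro ψ rfl
    simp [eval, hnm, not_rej_bot]

/-- conjunction introduction holds in exactly the two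
homogeneous forms of B-entailment, and fails in the mixed forms. -/
theorem conj_intro_forms :
    (∀ α β : Form,
      Bent {α, β} ∅ ∅ {Form.conj α β} ∧ Bent ∅ {α, β} {Form.conj α β} ∅) ∧
    (∀ n m : ℕ, n ≠ m →
      ¬ Bent ∅ {Form.var n, Form.var m} ∅ {Form.conj (Form.var n) (Form.var m)} ∧
      ¬ Bent {Form.var m} {Form.var n} ∅ {Form.conj (Form.var n) (Form.var m)}) :=
  ⟨fun α β => ⟨bent_conj_intro_acc α β, bent_conj_intro_rej α β⟩,
    fun _ _ hnm => ⟨not_bent_conj_intro_unrej_unacc _ _, not_bent_conj_intro_mixed hnm⟩⟩
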